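/- arXiv:2205.13831 — 5 statements merged into one kernel-verified Lean document; each statement's English description precedes it below -/
import Mathlib

section
/- Let k be a field of characteristic 2 and let ι be a k-algebra automorphism of k⟦u⟧ with ι∘ι = id, such that ι(u) = u + a for some a ∈ k⟦u⟧ with u-adic valuation v_u(a) = 2^h, where h ≥ 1. Set x = u·ι(u). Then a lies in the subring k⟦x⟧ of k⟦u⟧, the x-adic valuation of a (as an element of k⟦x⟧) equals 2^{h−1}, and u satisfies u² + a·u + x = 0. -/
/-!
Since `ι² = id` and the characteristic is 2, `ι` fixes `a = ι(u) - u` and `x = u·ι(u)`, and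
`x = u² + a·u = u²·w` with `w(0) = 1` because `v_u(a) ≥ 2`. The family `x^⌊j/2⌋·u^(j mod 2)`
is triangular, so every series is `b₀(x) + b₁(x)·u`. Applying `ι` to `a = b₀(x) + b₁(x)·u`
gives `b₁(x)·a = 0`, hence `a = b₀(x)`, and `v_u(b(x)) = 2·v_x(b)` yields `v_x(a) = 2^(h-1)`.
The quadratic relation is `u·ι(u) = x` rewritten in characteristic 2.
-/

open PowerSeries

/-- Substitution of a power series `b` into a power series `x` of positive order:
the `m`-th coefficient of `b(x)` is `∑_{n ≤ m} bₙ · coeff_m(xⁿ)` (the terms with `n > m`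
vanish when `x` has positive order). -/
noncomputable def substPS {k : Type*} [CommRing k] (x b : PowerSeries k) : PowerSeries k :=
  PowerSeries.mk fun m =>
    ∑ n ∈ Finset.range (m + 1), PowerSeries.coeff (R := k) n b * PowerSeries.coeff (R := k) m (x ^ n)

open Finset

theorem Finset.sum_range_two_mul {M : Type*} [AddCommMonoid M] (N : ℕ) (f : ℕ → M) :
    ∑ j ∈ range (2 * N), f j = ∑ n ∈ range N, f (2 * n) + ∑ n ∈ range N, f (2 * n + 1) := by
  induction N with
  | zero => simp
  | succ N ih =>
    rw [show 2 * (N + 1) = 2 * N + 1 + 1 by ring, sum_range_succ, sum_range_succ, ih,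
      sum_range_succ, sum_range_succ]
    abel

namespace PowerSeries

variable {R : Type*} [CommRing R]

section Triangular

/-- Solves `coeff m f = ∑_{j ≤ m} g j * coeff m (e j)` for `g m`, for a family with
`coeff m (e m) = 1`. -/
noncomputable def triangularCoeff (e : ℕ → R⟦X⟧) (f : R⟦X⟧) : ℕ → R
  | m => coeff m f - ∑ j ∈ (range m).attach, triangularCoeff e f j * coeff m (e j)
  decreasing_by exact mem_range.mp j.2

theorem coeff_eq_sum_triangularCoeff {e : ℕ → R⟦X⟧} (he : ∀ m, coeff m (e m) = 1)
    (f : R⟦X⟧) (m : ℕ) :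
    coeff m f = ∑ j ∈ range (m + 1), triangularCoeff e f j * coeff m (e j) := by
  rw [sum_range_succ, he, mul_one, triangularCoeff,
    sum_attach (range m) fun j => triangularCoeff e f j * coeff m (e j)]
  ring

end Triangular

section Subst

variable {x : R⟦X⟧}

theorem coeff_pow_eq_zero_of_X_pow_dvd {d : ℕ} (hx : X ^ d ∣ x) {m n : ℕ} (h : m < d * n) :
    coeff m (x ^ n) = 0 :=
  X_pow_dvd_iff.mp (pow_mul (X : R⟦X⟧) d n ▸ pow_dvd_pow_of_dvd hx n) m h

theorem coeff_substPS_of_lt (hx : X ∣ x) (b : R⟦X⟧) {m N : ℕ} (hN : m < N) :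
    coeff m (substPS x b) = ∑ n ∈ range N, coeff n b * coeff m (x ^ n) := by
  rw [substPS, coeff_mk]
  refine sum_subset (range_subset_range.mpr hN) fun n _ hn => ?_
  rw [coeff_pow_eq_zero_of_X_pow_dvd (d := 1) (by rwa [pow_one]) (by simp at hn; omega), mul_zero]

theorem coeff_substPS_mul_of_lt (hx : X ∣ x) (b y : R⟦X⟧) {m N : ℕ} (hN : m < N) :
    coeff m (substPS x b * y) = ∑ n ∈ range N, coeff n b * coeff m (x ^ n * y) := by
  simp_rw [coeff_mul, mul_sum]
  rw [sum_comm]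
  refine sum_congr rfl fun p hp => ?_
  have : p.1 < N := by have := mem_antidiagonal.mp hp; omega
  rw [coeff_substPS_of_lt hx b this, sum_mul]
  simp_rw [mul_assoc]

theorem X_pow_dvd_substPS_sub (hx : X ∣ x) (b : R⟦X⟧) (N : ℕ) :
    X ^ N ∣ substPS x b - ∑ n ∈ range N, C (coeff n b) * x ^ n := by
  refine X_pow_dvd_iff.mpr fun m hm => ?_
  simp only [map_sub, map_sum, coeff_C_mul]
  rw [coeff_substPS_of_lt hx b hm, sub_self]

/-- `X ∣ φ X` makes `φ` continuous for the `X`-adic topology, so it is enough to compare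
the two sides on the truncations `∑_{n ≤ m} bₙ xⁿ`. -/
theorem map_substPS (φ : R⟦X⟧ →ₐ[R] R⟦X⟧) (hφ : X ∣ φ X) (hx : X ∣ x) (b : R⟦X⟧) :
    φ (substPS x b) = substPS (φ x) b := by
  ext m
  set P := ∑ n ∈ range (m + 1), C (coeff n b) * x ^ n
  have hφP : φ P = ∑ n ∈ range (m + 1), C (coeff n b) * φ x ^ n := by
    simp only [P, map_sum, map_mul, map_pow, C_eq_algebraMap, AlgHom.commutes]
  have hφx : X ∣ φ x := by
    obtain ⟨t, rfl⟩ := hx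
    exact (map_mul φ X t).symm ▸ dvd_mul_of_dvd_left hφ _
  have hφS : X ^ (m + 1) ∣ φ (substPS x b) - φ P := by
    rw [← map_sub]
    obtain ⟨t, ht⟩ := X_pow_dvd_substPS_sub hx b (m + 1)
    rw [ht, map_mul, map_pow]
    exact dvd_mul_of_dvd_left (pow_dvd_pow_of_dvd hφ _) _
  have h := dvd_sub hφS (X_pow_dvd_substPS_sub hφx b (m + 1))
  rw [hφP, sub_sub_sub_cancel_right] at h
  exact sub_eq_zero.mp (X_pow_dvd_iff.mp h m (by omega))

theorem substPS_zero (x : R⟦X⟧) : substPS x 0 = 0 := by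
  ext m
  simp [substPS]

end Subst

section Decomposition

variable {w : R⟦X⟧}

theorem coeff_X_pow_mul_pow (hw : constantCoeff w = 1) (d n : ℕ) :
    coeff (d * n) ((X ^ d * w) ^ n) = 1 := by
  rw [mul_pow, ← pow_mul, coeff_X_pow_mul', if_pos le_rfl, Nat.sub_self,
    coeff_zero_eq_constantCoeff, map_pow, hw, one_pow]

theorem exists_eq_substPS_add_substPS_mul_X (hw : constantCoeff w = 1) (f : R⟦X⟧) :
    ∃ b₀ b₁ : R⟦X⟧, f = substPS (X ^ 2 * w) b₀ + substPS (X ^ 2 * w) b₁ * X := by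
  set x := X ^ 2 * w
  have hx : X ∣ x := dvd_mul_of_dvd_left (dvd_pow_self X two_ne_zero) w
  let e : ℕ → R⟦X⟧ := fun j => x ^ (j / 2) * X ^ (j % 2)
  have he : ∀ j, e j = X ^ j * w ^ (j / 2) := fun j => by
    simp only [e, x]
    rw [mul_pow, ← pow_mul, mul_right_comm, ← pow_add, Nat.div_add_mod]
  have he_coeff : ∀ m j, coeff m (e j) = if j ≤ m then coeff (m - j) (w ^ (j / 2)) else 0 :=
    fun m j => by rw [he, coeff_X_pow_mul']
  set g := triangularCoeff e f
  refine ⟨mk fun n => g (2 * n), mk fun n => g (2 * n + 1), ?_⟩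
  ext m
  have hdiag : ∀ m, coeff m (e m) = 1 := fun m => by
    rw [he_coeff, if_pos le_rfl, Nat.sub_self, coeff_zero_eq_constantCoeff, map_pow, hw, one_pow]
  have hwiden : ∑ j ∈ range (m + 1), g j * coeff m (e j) =
      ∑ j ∈ range (2 * (m + 1)), g j * coeff m (e j) := by
    refine sum_subset (range_subset_range.mpr (by omega)) fun j _ hj => ?_
    rw [he_coeff, if_neg (by simpa using hj), mul_zero]
  rw [map_add, coeff_substPS_of_lt hx _ m.lt_add_one, coeff_substPS_mul_of_lt hx _ X m.lt_add_one,
    coeff_eq_sum_triangularCoeff hdiag f m, hwiden, sum_range_two_mul]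
  congr 1 <;> refine sum_congr rfl fun n _ => ?_
  · simp [e, g]
  · simp [e, g, show (2 * n + 1) / 2 = n by omega]

theorem order_substPS (hw : constantCoeff w = 1) {d : ℕ} (hd : 1 ≤ d) (b : R⟦X⟧) :
    (substPS (X ^ d * w) b).order = d * b.order := by
  rcases eq_or_ne b 0 with rfl | hb
  · simp [substPS_zero, ENat.mul_top, show d ≠ 0 by omega]
  obtain ⟨N, hN⟩ := ENat.ne_top_iff_exists.mp (order_eq_top.not.mpr hb)
  obtain ⟨hbN, hb_lt⟩ := order_eq_nat.mp hN.symm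
  have hterm : ∀ m n, m ≤ d * N → (n = N → m < d * N) →
      coeff n b * coeff m ((X ^ d * w) ^ n) = 0 := by
    intro m n hm hmN
    rcases lt_or_ge n N with hn | hn
    · rw [hb_lt n hn, zero_mul]
    have hmn : m < d * n := by
      rcases eq_or_ne n N with rfl | hne
      · exact hmN rfl
      · have := Nat.mul_le_mul_left d (show N + 1 ≤ n by omega)
        rw [Nat.mul_succ] at this
        omega
    rw [coeff_pow_eq_zero_of_X_pow_dvd (dvd_mul_right _ w) hmn, mul_zero]
  rw [← hN, ← Nat.cast_mul, order_eq_nat]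
  refine ⟨?_, fun i hi => ?_⟩
  · rw [substPS, coeff_mk, sum_eq_single N, coeff_X_pow_mul_pow hw, mul_one]
    · exact hbN
    · exact fun n _ hn => hterm _ n le_rfl (absurd · hn)
    · exact fun hN => absurd (mem_range.mpr (by nlinarith)) hN
  · rw [substPS, coeff_mk]
    exact sum_eq_zero fun n _ => hterm i n hi.le fun _ => hi

end Decomposition

end PowerSeries

open PowerSeries

theorem exists_X_mul_X_add_eq_X_sq_mul {R : Type*} [CommRing R] {a : R⟦X⟧} (ha : X ^ 2 ∣ a) :
    ∃ w : R⟦X⟧, constantCoeff w = 1 ∧ X * (X + a) = X ^ 2 * w := by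
  obtain ⟨d, rfl⟩ := ha
  exact ⟨1 + X * d, by simp, by ring⟩

theorem exists_eq_substPS_of_map_eq_self {R : Type*} [CommRing R] [IsDomain R]
    (ι : R⟦X⟧ →ₐ[R] R⟦X⟧) (hinv : ∀ f, ι (ι f) = f) {a : R⟦X⟧} (hX : ι X = X + a)
    (ha0 : a ≠ 0) (ha : X ^ 2 ∣ a) {f : R⟦X⟧} (hf : ι f = f) :
    ∃ b, f = substPS (X * ι X) b := by
  obtain ⟨w, hw, hxw⟩ := exists_X_mul_X_add_eq_X_sq_mul ha
  have hιX : X ∣ ι X := hX ▸ dvd_add dvd_rfl (dvd_trans (dvd_pow_self X two_ne_zero) ha)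
  have hιx : ι (X * ι X) = X * ι X := by rw [map_mul, hinv, mul_comm]
  have hfix : ∀ b, ι (substPS (X * ι X) b) = substPS (X * ι X) b := fun b => by
    rw [map_substPS ι hιX (dvd_mul_right X _), hιx]
  obtain ⟨b₀, b₁, hf₀⟩ := exists_eq_substPS_add_substPS_mul_X hw f
  rw [← hxw, ← hX] at hf₀
  have hf₁ : f = substPS (X * ι X) b₀ + substPS (X * ι X) b₁ * (X + a) := by
    rw [← hf, hf₀, map_add, map_mul, hfix, hfix, hX]
  have hb₁ : substPS (X * ι X) b₁ = 0 :=
    (mul_eq_zero.mp (by linear_combination hf₀ - hf₁)).resolve_right ha0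
  exact ⟨b₀, by rw [hf₀, hb₁, zero_mul, add_zero]⟩

/-- Let `k` be a field of characteristic 2 and `ι` a `k`-algebra involution of `k⟦u⟧` with
`ι(u) = u + a` where `v_u(a) = 2^h`, `h ≥ 1`.  Set `x = u·ι(u)`.  Then `a` lies in the
subring `k⟦x⟧` (i.e. `a = b(x)` for some `b ∈ k⟦x⟧`), the `x`-adic valuation of `a` is
`2^(h-1)`, and `u² + a·u + x = 0`. -/
theorem stmt_4 (k : Type*) [Field k] [CharP k 2]
    (ι : PowerSeries k ≃ₐ[k] PowerSeries k) (hinv : ∀ f, ι (ι f) = f)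
    (a : PowerSeries k) (h : ℕ) (hh : 1 ≤ h)
    (hX : ι (X : PowerSeries k) = X + a)
    (ha : a.order = (2 ^ h : ℕ)) :
    (∃ b : PowerSeries k,
        a = substPS (X * ι (X : PowerSeries k)) b ∧ b.order = (2 ^ (h - 1) : ℕ)) ∧
      X ^ 2 + a * X + X * ι (X : PowerSeries k) = 0 := by
  have : CharP k⟦X⟧ 2 := charP_of_injective_algebraMap (algebraMap k k⟦X⟧).injective 2
  have hpow : 2 ^ h = 2 * 2 ^ (h - 1) := by rw [← pow_succ']; congr 1; omega
  have ha0 : a ≠ 0 := order_eq_top.not.mp (ha ▸ ENat.natCast_ne_top _)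
  have hX2 : X ^ 2 ∣ a := by
    refine X_pow_dvd_iff.mpr fun m hm => coeff_of_lt_order m ?_
    rw [ha, hpow]; exact_mod_cast (by have := Nat.one_le_two_pow (n := h - 1); omega)
  have hιa : ι a = a := by
    have := hinv X
    rw [hX, map_add, hX, add_assoc, add_eq_left, CharTwo.add_eq_zero] at this
    exact this.symm
  refine ⟨?_, by rw [hX]; linear_combination (X ^ 2 + a * X) * CharTwo.two_eq_zero (R := k⟦X⟧)⟩
  obtain ⟨b, hb⟩ := exists_eq_substPS_of_map_eq_self ι.toAlgHom hinv hX ha0 hX2 hιa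
  refine ⟨b, hb, ?_⟩
  obtain ⟨w, hw, hxw⟩ := exists_X_mul_X_add_eq_X_sq_mul hX2
  have hb' : a = substPS (X ^ 2 * w) b := by rw [← hxw, ← hX]; exact hb
  rw [hb', order_substPS hw one_le_two] at ha
  obtain ⟨N, hN⟩ := ENat.ne_top_iff_exists.mp (show b.order ≠ ⊤ by
    rintro htop; rw [htop, ENat.mul_top (by simp)] at ha; exact ENat.top_ne_natCast _ ha)
  rw [← hN] at ha ⊢
  norm_cast at ha ⊢
  omega
end

section
/- Let k be a field of characteristic 2 and ι a continuous k-algebra involution of k⟦u⟧ with ι(u) = u + a where a ∈ (u²). Then k⟦u⟧ is a free module of rank 2 over the subring k⟦x⟧, where x = u·ι(u), with basis {1, u}. -/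
/-!
Since `a ∈ (X²)`, we have `x = X * ι X = X² (1 + X c)`. In degree `m`, the coefficient of
`b₀(x) + b₁(x) X` is the `m`-th entry of the interleaved sequence `(b₀₀, b₁₀, b₀₁, b₁₁, …)` plus a
combination of earlier entries, because `xⁿ` starts with `X²ⁿ`. So in these coordinates the map
`(b₀, b₁) ↦ b₀(x) + b₁(x) X` is unitriangular, and the coefficient equations can be solved uniquely
one degree at a time.
-/

open PowerSeries

open Function

section Unitriangular

variable {M : Type*} [AddCommGroup M]

noncomputable def unitriangularSolve (T : (ℕ → M) →+ (ℕ → M)) (g : ℕ → M) : ℕ → M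
  | n => g n - T (fun j => if _ : j < n then unitriangularSolve T g j else 0) n

theorem bijective_of_unitriangular (T : (ℕ → M) →+ (ℕ → M))
    (hT : ∀ d m, (∀ j < m, d j = 0) → T d m = d m) : Bijective T := by
  refine ⟨(injective_iff_map_eq_zero T).mpr fun d hd => funext fun m => ?_, fun g => ?_⟩
  · induction m using Nat.strong_induction_on with
    | _ m ih => rw [← hT d m ih, hd]
  · set w := unitriangularSolve T g
    refine ⟨w, funext fun n => ?_⟩
    set t : ℕ → M := fun j => if j < n then w j else 0
    have hw : w n = g n - T t n := by
      rw [show w n = unitriangularSolve T g n from rfl, unitriangularSolve]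
      simp only [dite_eq_ite, w, t]
    have htail : T (w - t) n = w n := by
      rw [hT (w - t) n fun j hj => by simp [t, hj]]
      simp [t]
    rw [show w = t + (w - t) by abel, map_add, Pi.add_apply, htail, hw]
    abel

end Unitriangular

section Substitution

variable {R : Type*} [CommRing R]

noncomputable def coeffSeqEquiv (R : Type*) [CommRing R] : R⟦X⟧ ≃ (ℕ → R) where
  toFun f n := coeff n f
  invFun := mk
  left_inv _ := ext fun n => coeff_mk n _
  right_inv w := funext fun n => coeff_mk n w

noncomputable def evenOddEquiv (R : Type*) [CommRing R] : (ℕ → R) ≃ R⟦X⟧ × R⟦X⟧ :=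
  ((Equiv.natSumNatEquivNat.arrowCongr (Equiv.refl R)).symm.trans
    (Equiv.sumArrowEquivProdArrow ℕ ℕ R)).trans
    (Equiv.prodCongr (coeffSeqEquiv R).symm (coeffSeqEquiv R).symm)

@[simp]
theorem evenOddEquiv_apply (w : ℕ → R) :
    evenOddEquiv R w = (mk fun n => w (2 * n), mk fun n => w (2 * n + 1)) := by
  rfl

theorem substPS_add (x p q : R⟦X⟧) : substPS x (p + q) = substPS x p + substPS x q := by
  ext m
  simp [substPS, add_mul, Finset.sum_add_distrib]

variable {x u : R⟦X⟧}

theorem coeff_pow_of_lt_two_mul (hx : x = X ^ 2 * u) {m n : ℕ} (h : m < 2 * n) :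
    coeff m (x ^ n) = 0 := by
  rw [hx, mul_pow, ← pow_mul, coeff_X_pow_mul', if_neg (by omega)]

theorem coeff_two_mul_pow (hx : x = X ^ 2 * u) (hu : constantCoeff u = 1) (n : ℕ) :
    coeff (2 * n) (x ^ n) = 1 := by
  rw [hx, mul_pow, ← pow_mul, coeff_X_pow_mul', if_pos le_rfl, Nat.sub_self,
    coeff_zero_eq_constantCoeff, map_pow, hu, one_pow]

theorem coeff_two_mul_substPS (hx : x = X ^ 2 * u) (hu : constantCoeff u = 1) {p : R⟦X⟧}
    {n : ℕ} (hp : ∀ j < n, coeff j p = 0) : coeff (2 * n) (substPS x p) = coeff n p := by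
  rw [substPS, coeff_mk, Finset.sum_eq_single_of_mem n (by simp; omega), coeff_two_mul_pow hx hu,
    mul_one]
  intro j _ hj
  rcases lt_or_gt_of_ne hj with hj | hj
  · rw [hp j hj, zero_mul]
  · rw [coeff_pow_of_lt_two_mul hx (by omega), mul_zero]

theorem coeff_two_mul_add_one_substPS (hx : x = X ^ 2 * u) {p : R⟦X⟧} {n : ℕ}
    (hp : ∀ j ≤ n, coeff j p = 0) : coeff (2 * n + 1) (substPS x p) = 0 := by
  rw [substPS, coeff_mk]
  refine Finset.sum_eq_zero fun j _ => ?_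
  rcases le_or_gt j n with hj | hj
  · rw [hp j hj, zero_mul]
  · rw [coeff_pow_of_lt_two_mul hx (by omega), mul_zero]

theorem coeff_substPS_evenOdd_of_forall_lt (hx : x = X ^ 2 * u) (hu : constantCoeff u = 1)
    {d : ℕ → R} {m : ℕ} (hd : ∀ j < m, d j = 0) :
    coeff m (substPS x (mk fun n => d (2 * n)) + substPS x (mk fun n => d (2 * n + 1)) * X)
      = d m := by
  have hd₀ : ∀ j, 2 * j < m → coeff j (mk fun n => d (2 * n)) = 0 := fun j hj =>
    (coeff_mk _ _).trans (hd _ hj)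
  have hd₁ : ∀ j, 2 * j + 1 < m → coeff j (mk fun n => d (2 * n + 1)) = 0 := fun j hj =>
    (coeff_mk _ _).trans (hd _ hj)
  obtain ⟨n, rfl | rfl⟩ := Nat.even_or_odd' m
  · rw [map_add, coeff_two_mul_substPS hx hu fun j hj => hd₀ j (by omega), coeff_mk]
    rcases n with _ | n
    · simp
    · rw [show 2 * (n + 1) = 2 * n + 1 + 1 by ring, coeff_succ_mul_X,
        coeff_two_mul_add_one_substPS hx fun j hj => hd₁ j (by omega), add_zero]
  · rw [map_add, coeff_succ_mul_X, coeff_two_mul_add_one_substPS hx fun j hj => hd₀ j (by omega),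
      coeff_two_mul_substPS hx hu fun j hj => hd₁ j (by omega), coeff_mk, zero_add]

theorem bijective_substPS_add_substPS_mul_X (hx : x = X ^ 2 * u) (hu : constantCoeff u = 1) :
    Bijective fun b : R⟦X⟧ × R⟦X⟧ => substPS x b.1 + substPS x b.2 * X := by
  set Φ := fun b : R⟦X⟧ × R⟦X⟧ => substPS x b.1 + substPS x b.2 * X
  let T : (ℕ → R) →+ (ℕ → R) :=
    AddMonoidHom.mk' (coeffSeqEquiv R ∘ Φ ∘ evenOddEquiv R) fun v w => by
      have hsplit : evenOddEquiv R (v + w) = evenOddEquiv R v + evenOddEquiv R w := by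
        ext <;> simp
      funext m
      simp only [comp_apply, hsplit, Φ, Prod.fst_add, Prod.snd_add, substPS_add, add_mul]
      simp only [coeffSeqEquiv, Equiv.coe_fn_mk, map_add, Pi.add_apply]
      abel
  have hT : Bijective T := bijective_of_unitriangular T fun d m hd => by
    simpa [T, Φ, coeffSeqEquiv] using coeff_substPS_evenOdd_of_forall_lt hx hu hd
  exact (Equiv.bijective_comp _ _).mp ((Equiv.comp_bijective _ _).mp hT)

end Substitution

theorem stmt_5_general (k : Type*) [Field k]
    (ι : PowerSeries k ≃ₐ[k] PowerSeries k)
    (a : PowerSeries k)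
    (ha : a ∈ Ideal.span ({X ^ 2} : Set (PowerSeries k)))
    (hX : ι (X : PowerSeries k) = X + a) :
    ∀ f : PowerSeries k, ∃! b : PowerSeries k × PowerSeries k,
      f = substPS (X * ι (X : PowerSeries k)) b.1
            + substPS (X * ι (X : PowerSeries k)) b.2 * X := by
  obtain ⟨c, rfl⟩ := Ideal.mem_span_singleton'.mp ha
  have hx : X * ι X = X ^ 2 * (1 + X * c) := by rw [hX]; ring
  intro f
  simpa only [eq_comm] using (bijective_substPS_add_substPS_mul_X hx (by simp)).existsUnique f

/-- Let `k` be a field of characteristic 2 and `ι` a `k`-algebra involution of `k⟦u⟧` with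
`ι(u) = u + a`, `a ∈ (u²)`.  Then `k⟦u⟧` is free of rank 2 over the subring
`k⟦x⟧`, `x = u·ι(u)`, with basis `{1, u}`: every `f ∈ k⟦u⟧` is uniquely of the form
`b₀(x) + b₁(x)·u` with `b₀, b₁ ∈ k⟦x⟧`. -/
theorem stmt_5 (k : Type*) [Field k] [CharP k 2]
    (ι : PowerSeries k ≃ₐ[k] PowerSeries k) (hinv : ∀ f, ι (ι f) = f)
    (a : PowerSeries k)
    (ha : a ∈ Ideal.span ({X ^ 2} : Set (PowerSeries k)))
    (hX : ι (X : PowerSeries k) = X + a) :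
    ∀ f : PowerSeries k, ∃! b : PowerSeries k × PowerSeries k,
      f = substPS (X * ι (X : PowerSeries k)) b.1
            + substPS (X * ι (X : PowerSeries k)) b.2 * X :=
  stmt_5_general k ι a ha hX
end

section
/- Let G be a subgroup of GL₂(𝔽₂) × GL₂(𝔽₂), acting on the 8-element 𝔽₂-vector space M = M₂(𝔽₂) of 2×2 matrices by (A,B)·X = A X B⁻¹. Then H¹(G, M) = 0. -/
open Matrix

/-- The representation of `GL₂(𝔽₂) × GL₂(𝔽₂)` on the space `M₂(𝔽₂)` of `2×2` matrices
given by `(A, B)·X = A X B⁻¹`. -/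
def glRep : Representation (ZMod 2)
    (GL (Fin 2) (ZMod 2) × GL (Fin 2) (ZMod 2)) (Matrix (Fin 2) (Fin 2) (ZMod 2)) where
  toFun g :=
    { toFun := fun M => (g.1 : Matrix (Fin 2) (Fin 2) (ZMod 2)) * M *
        ((g.2⁻¹ : GL (Fin 2) (ZMod 2)) : Matrix (Fin 2) (Fin 2) (ZMod 2))
      map_add' := fun M N => by simp only [Matrix.mul_add, Matrix.add_mul]
      map_smul' := fun c M => by
        simp [Matrix.mul_smul, Matrix.smul_mul] }
  map_one' := by
    apply LinearMap.ext
    intro M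
    simp
  map_mul' := by
    intro g h
    apply LinearMap.ext
    intro M
    show _ = (g.1 : Matrix (Fin 2) (Fin 2) (ZMod 2)) *
        ((h.1 : Matrix (Fin 2) (Fin 2) (ZMod 2)) * M *
          ((h.2⁻¹ : GL (Fin 2) (ZMod 2)) : Matrix (Fin 2) (Fin 2) (ZMod 2))) *
        ((g.2⁻¹ : GL (Fin 2) (ZMod 2)) : Matrix (Fin 2) (Fin 2) (ZMod 2))
    simp [Prod.fst_mul, Prod.snd_mul, _root_.mul_inv_rev, Units.val_mul, mul_assoc]

/-!
Restriction to a subgroup `P` of odd index is injective on `H¹` with `𝔽₂`-coefficients, since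
corestriction after restriction is multiplication by the index. Take `P` a Sylow `2`-subgroup of
`G ≤ GL₂(𝔽₂) × GL₂(𝔽₂)`. Element orders in `GL₂(𝔽₂) ≅ S₃` divide `6`, so `P` has exponent `2`, and
`|P| ∣ 36` gives `|P| ≤ 4`; hence `P` is generated by two commuting involutions. A cocycle on `P` is
determined by its values at these generators, and a finite computation in `M₂(𝔽₂)` shows that it
is a coboundary.
-/

open groupCohomology

universe u

section Restriction

variable {k Γ : Type u} [CommRing k] [Group Γ] {A : Rep.{u} k Γ}

lemma subsingleton_H1_of_forall_exists
    (h : ∀ f : cocycles₁ A, ∃ m : A, ∀ g, f g = A.ρ g m - m) : Subsingleton (H1 A) := by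
  refine subsingleton_of_forall_eq 0 fun x => ?_
  induction x using H1_induction_on with | h f => ?_
  obtain ⟨m, hm⟩ := h f
  exact (H1π_eq_zero_iff f).2 ⟨m, funext fun g => (hm g).symm⟩

lemma cocycles₁_eq_of_mk_eq {P : Subgroup Γ} (F : cocycles₁ A) (hF : ∀ p ∈ P, F p = 0)
    {x y : Γ} (h : (x : Γ ⧸ P) = y) : F x = F y := by
  have hxy : y = x * (x⁻¹ * y) := by group
  rw [hxy, (mem_cocycles₁_iff F).1 F.2, hF _ (QuotientGroup.eq.1 h), map_zero, zero_add]

lemma exists_eq_sub_of_forall_mem_subgroup {P : Subgroup Γ} [P.FiniteIndex]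
    (hP : IsUnit (P.index : k)) (f : cocycles₁ A) {m₀ : A}
    (hm₀ : ∀ p ∈ P, f p = A.ρ p m₀ - m₀) : ∃ m : A, ∀ g, f g = A.ρ g m - m := by
  let := P.fintypeQuotientOfFiniteIndex
  let F : cocycles₁ A := f - ⟨d₀₁ A m₀, d₀₁_apply_mem_cocycles₁ m₀⟩
  have hF : ∀ g, F g = f g - (A.ρ g m₀ - m₀) := fun _ => rfl
  have hFP : ∀ p ∈ P, F p = 0 := fun p hp => by rw [hF, hm₀ p hp, sub_self]
  -- `F` vanishes on `P`, hence is constant on left cosets; summing it over coset representatives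
  -- gives `s` with `ρ g s = s - [Γ : P] • F g`, the identity `cor ∘ res = [Γ : P]`.
  let s : A := ∑ c : Γ ⧸ P, F c.out
  have hs : ∀ g, A.ρ g s = s - (P.index : k) • F g := by
    intro g
    have hc : ∀ c : Γ ⧸ P, A.ρ g (F c.out) = F (g • c).out - F g := fun c => by
      rw [eq_sub_iff_add_eq, ← (mem_cocycles₁_iff F).1 F.2]
      refine cocycles₁_eq_of_mk_eq F hFP ?_
      rw [QuotientGroup.out_eq']
      exact MulAction.Quotient.mk_smul_out P g c
    rw [map_sum, Finset.sum_congr rfl fun c _ => hc c, Finset.sum_sub_distrib,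
      Fintype.sum_equiv (MulAction.toPerm g) (fun c : Γ ⧸ P => F (g • c).out)
        (fun c => F c.out) fun _ => rfl, Finset.sum_const,
      Finset.card_univ, P.index_eq_card, Nat.card_eq_fintype_card, Nat.cast_smul_eq_nsmul]
  obtain ⟨r, hr⟩ := hP.exists_left_inv
  refine ⟨m₀ - r • s, fun g => ?_⟩
  have hFg : F g = r • s - A.ρ g (r • s) := by
    rw [map_smul, hs, smul_sub, smul_smul, hr, one_smul, sub_sub_cancel]
  rw [map_sub, sub_eq_iff_eq_add.1 (hF g).symm, hFg]
  abel

end Restriction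

section Involutions

variable {K : Type*} [Group K]

lemma commute_of_mul_self_eq_one {a b : K} (ha : a * a = 1) (hb : b * b = 1)
    (hab : a * b * (a * b) = 1) : Commute a b :=
  calc a * b = (a * b)⁻¹ := eq_inv_of_mul_eq_one_left hab
    _ = b * a := by
      rw [_root_.mul_inv_rev, inv_eq_of_mul_eq_one_left ha, inv_eq_of_mul_eq_one_left hb]

lemma exists_forall_eq_one_or_eq_or_eq_or_eq_mul [Finite K] (hcard : Nat.card K ≤ 4)
    (hsq : ∀ x : K, x * x = 1) : ∃ g h : K, ∀ x : K, x = 1 ∨ x = g ∨ x = h ∨ x = g * h := by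
  have := Fintype.ofFinite K
  by_cases h1 : ∀ x : K, x = 1
  · exact ⟨1, 1, fun x => Or.inl (h1 x)⟩
  obtain ⟨g, hg⟩ := not_forall.1 h1
  by_cases h2 : ∀ x : K, x = 1 ∨ x = g
  · exact ⟨g, g, fun x => (h2 x).imp_right Or.inl⟩
  obtain ⟨h, hh⟩ := not_forall.1 h2
  refine ⟨g, h, fun x => ?_⟩
  by_contra hx
  push Not at hh hx
  have hgh : g * h ≠ 1 := fun e => hh.2 <| by
    rw [← inv_eq_of_mul_eq_one_right e, inv_eq_of_mul_eq_one_left (hsq g)]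
  have hnodup : [1, g, h, g * h, x].Nodup := by
    simp only [List.nodup_cons, List.mem_cons, List.not_mem_nil, List.nodup_nil, or_false,
      not_or, not_false_eq_true, and_true]
    refine ⟨⟨Ne.symm hg, Ne.symm hh.1, Ne.symm hgh, Ne.symm hx.1⟩,
      ⟨Ne.symm hh.2, fun e => hh.1 (by simpa using e), Ne.symm hx.2.1⟩,
      ⟨fun e => hg (by simpa using e), Ne.symm hx.2.2.1⟩, Ne.symm hx.2.2.2⟩
  have h5 := hnodup.length_le_card
  rw [Nat.card_eq_fintype_card] at hcard
  simp only [List.length_cons, List.length_nil] at h5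
  omega

end Involutions

lemma Sylow.isUnit_index {p : ℕ} [Fact p.Prime] {K : Type*} [Group K] [Finite K] (P : Sylow p K) :
    IsUnit ((P : Subgroup K).index : ZMod p) :=
  isUnit_iff_ne_zero.2 <| (ZMod.natCast_eq_zero_iff _ _).not.2 P.not_dvd_index

local notation "𝕄" => Matrix (Fin 2) (Fin 2) (ZMod 2)
local notation "𝔾" => GL (Fin 2) (ZMod 2) × GL (Fin 2) (ZMod 2)

lemma glRep_apply_of_mul_self {x : 𝔾} (hx : x * x = 1) (X : 𝕄) :
    glRep x X = (x.1 : 𝕄) * X * (x.2 : 𝕄) := by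
  have h2 : x.2⁻¹ = x.2 := inv_eq_of_mul_eq_one_right (congrArg Prod.snd hx)
  change (x.1 : 𝕄) * X * ((x.2⁻¹ : GL (Fin 2) (ZMod 2)) : 𝕄) = _
  rw [h2]

-- `v` and `w` are the values at `(A, B)` and `(C, D)` of a cocycle on the group they generate,
-- acting by `X ↦ A X B`. The hypotheses are interleaved with the quantifiers to prune the search.
set_option synthInstance.maxSize 4000 in
lemma exists_coboundary_of_commuting_involutions :
    ∀ A : 𝕄, A * A = 1 → ∀ B : 𝕄, B * B = 1 → ∀ C : 𝕄, C * C = 1 → A * C = C * A →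
    ∀ D : 𝕄, D * D = 1 → B * D = D * B →
    ∀ v : 𝕄, (A = 1 → B = 1 → v = 0) → A * v * B + v = 0 →
    ∀ w : 𝕄, (C = 1 → D = 1 → w = 0) → C * w * D + w = 0 → (A = C → B = D → v = w) →
    A * w * B + v = C * v * D + w →
    ∃ m : 𝕄, v = A * m * B - m ∧ w = C * m * D - m := by
  decide +kernel

section Cocycles

variable {G : Subgroup 𝔾}

lemma cocycles₁_glRep_map_mul (f : cocycles₁ (Rep.of (glRep.comp G.subtype))) (a b : G) :
    f (a * b) = glRep a (f b) + f a :=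
  (mem_cocycles₁_iff f).1 f.2 a b

lemma exists_eq_sub_of_commute (f : cocycles₁ (Rep.of (glRep.comp G.subtype))) {g h : G}
    (hg : g * g = 1) (hh : h * h = 1) (hgh : Commute g h) :
    ∃ m : 𝕄, f g = glRep g m - m ∧ f h = glRep h m - m := by
  have hv : glRep g (f g) + f g = 0 := by rw [← cocycles₁_glRep_map_mul, hg, cocycles₁_map_one]
  have hw : glRep h (f h) + f h = 0 := by rw [← cocycles₁_glRep_map_mul, hh, cocycles₁_map_one]
  have hvw : glRep g (f h) + f g = glRep h (f g) + f h := by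
    rw [← cocycles₁_glRep_map_mul, ← cocycles₁_glRep_map_mul, hgh.eq]
  have hg1 : g = 1 → f g = 0 := by rintro rfl; exact cocycles₁_map_one f
  have hh1 : h = 1 → f h = 0 := by rintro rfl; exact cocycles₁_map_one f
  have hgh1 : g = h → f g = f h := by rintro rfl; rfl
  have hcomm : (g : 𝔾) * h = h * g := by exact_mod_cast congrArg Subtype.val hgh.eq
  have hgv : (g : 𝔾) * g = 1 := by exact_mod_cast congrArg Subtype.val hg
  have hhv : (h : 𝔾) * h = 1 := by exact_mod_cast congrArg Subtype.val hh
  simp only [glRep_apply_of_mul_self hgv, glRep_apply_of_mul_self hhv] at hv hw hvw ⊢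
  simp only [Prod.ext_iff, Units.ext_iff, Prod.fst_mul, Prod.snd_mul, Units.val_mul, Prod.fst_one,
    Prod.snd_one, Units.val_one, Subtype.ext_iff, Subgroup.coe_one] at hgv hhv hcomm hg1 hh1 hgh1
  exact exists_coboundary_of_commuting_involutions _ hgv.1 _ hgv.2 _ hhv.1 hcomm.1 _ hhv.2 hcomm.2
    _ (fun h₁ h₂ => hg1 ⟨h₁, h₂⟩) hv _ (fun h₁ h₂ => hh1 ⟨h₁, h₂⟩) hw
    (fun h₁ h₂ => hgh1 ⟨h₁, h₂⟩) hvw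

lemma exists_forall_mem_eq_sub (f : cocycles₁ (Rep.of (glRep.comp G.subtype))) {P : Subgroup G}
    (hsq : ∀ x ∈ P, x * x = 1) (hcard : Nat.card P ≤ 4) :
    ∃ m : 𝕄, ∀ p ∈ P, f p = glRep p m - m := by
  have hP : ∀ x : P, (x : G) * x = 1 := fun x => hsq x x.2
  obtain ⟨g, h, hgh⟩ := exists_forall_eq_one_or_eq_or_eq_or_eq_mul hcard fun x => Subtype.ext (hP x)
  obtain ⟨m, hg, hh⟩ := exists_eq_sub_of_commute f (hP g) (hP h)
    (commute_of_mul_self_eq_one (hP g) (hP h) (hP (g * h)))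
  refine ⟨m, fun p hp => ?_⟩
  rcases hgh ⟨p, hp⟩ with e | e | e | e <;> obtain rfl := congrArg Subtype.val e
  · simp
  · exact hg
  · exact hh
  · rw [Subgroup.coe_mul, cocycles₁_glRep_map_mul, hg, hh, map_sub, ← Module.End.mul_apply,
      ← map_mul, Subgroup.coe_mul]
    abel

end Cocycles

lemma card_GL_fin_two_zmod_two : Nat.card (GL (Fin 2) (ZMod 2)) = 6 := by
  rw [Matrix.card_GL_field]
  decide

lemma orderOf_dvd_six (x : 𝔾) : orderOf x ∣ 6 :=
  orderOf_dvd_of_pow_eq_one <| Prod.ext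
    (card_GL_fin_two_zmod_two ▸ pow_card_eq_one') (card_GL_fin_two_zmod_two ▸ pow_card_eq_one')

section Sylow

variable {G : Subgroup 𝔾} (P : Sylow 2 G)

lemma mul_self_eq_one_of_mem_sylow {x : G} (hx : x ∈ P) : x * x = 1 := by
  obtain ⟨k, hk⟩ := IsPGroup.iff_orderOf.1 P.isPGroup' ⟨x, hx⟩
  rw [← Subgroup.orderOf_coe] at hk
  have h6 : orderOf x ∣ 2 * 3 := by rw [← Subgroup.orderOf_coe]; exact orderOf_dvd_six x
  rw [hk] at h6
  rw [← sq, ← orderOf_dvd_iff_pow_eq_one, hk]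
  exact (Nat.Coprime.pow_left k (by norm_num)).dvd_of_dvd_mul_right h6

lemma card_sylow_le_four : Nat.card P ≤ 4 := by
  obtain ⟨k, hk⟩ := P.isPGroup'.exists_card_eq
  have h36 : Nat.card P ∣ 2 ^ 2 * 9 :=
    (Subgroup.card_subgroup_dvd_card _).trans <| (Subgroup.card_subgroup_dvd_card G).trans <| by
      rw [Nat.card_prod, card_GL_fin_two_zmod_two]; norm_num
  rw [hk] at h36 ⊢
  exact Nat.le_of_dvd (by norm_num)
    ((Nat.Coprime.pow_left k (by norm_num)).dvd_of_dvd_mul_right h36)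

end Sylow

/-- For any subgroup `G` of `GL₂(𝔽₂) × GL₂(𝔽₂)` acting on `M₂(𝔽₂)` by
`(A,B)·X = A X B⁻¹`, one has `H¹(G, M₂(𝔽₂)) = 0`. -/
theorem stmt_7 (G : Subgroup (GL (Fin 2) (ZMod 2) × GL (Fin 2) (ZMod 2))) :
    Subsingleton (groupCohomology.H1 (Rep.of (glRep.comp G.subtype))) := by
  refine subsingleton_H1_of_forall_exists fun f => ?_
  obtain ⟨P⟩ : Nonempty (Sylow 2 G) := inferInstance
  obtain ⟨m, hm⟩ := exists_forall_mem_eq_sub f (fun _ => mul_self_eq_one_of_mem_sylow P)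
    (card_sylow_le_four P)
  exact exists_eq_sub_of_forall_mem_subgroup P.isUnit_index f hm
end

section
/- Let W be a 4-dimensional 𝔽₂-vector space with a 2-dimensional subspace V₁, set V₂ = W/V₁, and let G be a finite group acting linearly on W preserving V₁, so that G acts on V₁ and V₂. Suppose the induced homomorphism from the image G_W of G in GL(W) to GL(V₁) × GL(V₂) is injective. Then the extension of 𝔽₂[G]-modules 0 → V₁ → W → V₂ → 0 splits. -/
/-!
Projections of `W` onto `V₁` form an affine space over `Hom(W ⧸ V₁, V₁)` on which `G` acts by
conjugation, and the kernel of a `G`-equivariant projection is an invariant complement. Averaging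
over the cosets of a Sylow `2`-subgroup `S`, whose index is odd, reduces the problem to `S`.
A `2`-subgroup of `GL₂(𝔽₂) ≅ S₃` has order at most `2`, so by injectivity `S` acts through a
subgroup of a Klein four-group of pairs `(a, b)` with `a² = 1` on `V₁` and `b² = 1` on
`W ⧸ V₁`, acting on `Hom(W ⧸ V₁, V₁) ≅ M₂(𝔽₂)` by `x ↦ a * x * b`. Each `(a, b) ≠ 1` makes this
module free over `𝔽₂⟨(a, b)⟩`, so the obstruction to an `S`-fixed projection, a class in `H¹`,
can be killed one generator at a time; each step is a finite computation in `M₂(𝔽₂)`.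
-/

open LinearMap Module Submodule

local notation "𝕄" => Matrix (Fin 2) (Fin 2) (ZMod 2)

namespace Matrix

theorem mul_self_eq_one_of_pow_four_eq_one (m : 𝕄) (hm : m ^ 4 = 1) : m * m = 1 := by
  revert m
  decide

theorem mul_self_eq_one_of_pow_two_pow_eq_one (m : 𝕄) (n : ℕ) (hm : m ^ 2 ^ n = 1) :
    m * m = 1 := by
  induction n generalizing m with
  | zero => rw [pow_zero, pow_one] at hm; rw [hm, one_mul]
  | succ n ih =>
    refine mul_self_eq_one_of_pow_four_eq_one m ?_
    rw [show 4 = 2 * 2 from rfl, pow_mul, ← ih _ (by rwa [← pow_mul, ← pow_succ']), pow_two]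

set_option synthInstance.maxSize 2000 in
/-- For `p ≠ 1`, the action `x ↦ p.1 * x * p.2` makes `𝕄` a free `𝔽₂[C₂]`-module, so its first
cohomology vanishes. -/
theorem exists_eq_add_mul_mul (p : 𝕄 × 𝕄) (hp : p * p = 1) (hp1 : p ≠ 1) (m : 𝕄)
    (hm : p.1 * m * p.2 = m) : ∃ x, m = x + p.1 * x * p.2 := by
  obtain ⟨a, b⟩ := p
  revert a b m
  decide

set_option maxRecDepth 100000 in
set_option synthInstance.maxSize 2000 in
theorem exists_mul_mul_eq_and_eq_add_mul_mul (p q : 𝕄 × 𝕄) (hp : p * p = 1) (hq : q * q = 1)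
    (hpq : p * q = q * p) (hq1 : q ≠ 1) (hqp : q ≠ p) (m : 𝕄) (hmp : p.1 * m * p.2 = m)
    (hmq : q.1 * m * q.2 = m) : ∃ x, p.1 * x * p.2 = x ∧ m = x + q.1 * x * q.2 := by
  obtain ⟨a₁, b₁⟩ := p
  obtain ⟨a₂, b₂⟩ := q
  revert a₁ b₁ a₂ b₂ m
  decide

set_option maxRecDepth 100000 in
set_option synthInstance.maxSize 2000 in
/-- The Sylow `2`-subgroups of `GL₂(𝔽₂) × GL₂(𝔽₂)` are Klein four-groups. -/
theorem eq_one_or_eq_or_eq_or_eq_mul (p q r : 𝕄 × 𝕄) (hp : p * p = 1) (hq : q * q = 1)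
    (hr : r * r = 1) (hpq : p * q = q * p) (hrp : r * p = p * r) (hrq : r * q = q * r)
    (hp1 : p ≠ 1) (hq1 : q ≠ 1) (hqp : q ≠ p) : r = 1 ∨ r = p ∨ r = q ∨ r = p * q := by
  obtain ⟨a₁, b₁⟩ := p
  obtain ⟨a₂, b₂⟩ := q
  obtain ⟨a, b⟩ := r
  revert a₁ b₁ a₂ b₂ a b
  decide

end Matrix

theorem commute_iff_mul_mul_eq_of_mul_self_eq_one {M : Type*} [Monoid M] {t e : M}
    (ht : t * t = 1) : Commute t e ↔ t * e * t = e := by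
  refine ⟨fun h => by rw [h.eq, mul_assoc, ht, mul_one], fun h => ?_⟩
  calc t * e = t * e * (t * t) := by rw [ht, mul_one]
    _ = e * t := by rw [← mul_assoc, h]

theorem commute_of_mul_self_eq_one_s11 {M : Type*} [Monoid M] {x y : M} (hx : x * x = 1)
    (hy : y * y = 1) (hxy : x * y * (x * y) = 1) : Commute x y :=
  calc x * y = x * y * (x * (y * y) * x) := by rw [hy, mul_one, hx, mul_one]
    _ = x * y * (x * y) * (y * x) := by simp only [mul_assoc]
    _ = y * x := by rw [hxy, one_mul]

namespace LinearMap.IsProj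

variable {k W : Type*} [CommRing k] [AddCommGroup W] [Module k W] {V : Submodule k W}
  {q : Module.End k W}

theorem mul_mul (hq : IsProj V q) {t t' : Module.End k W} (ht : V ≤ V.comap t)
    (ht' : V ≤ V.comap t') (htt' : t * t' = 1) : IsProj V (t * q * t') where
  map_mem w := ht (hq.map_mem (t' w))
  map_id v hv := by
    rw [Module.End.mul_apply, Module.End.mul_apply, hq.map_id _ (ht' hv), ← Module.End.mul_apply,
      htt', Module.End.one_apply]

theorem smul_sum {ι : Type*} [Fintype ι] {f : ι → Module.End k W} (hf : ∀ i, IsProj V (f i))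
    {c : k} (hc : c * Fintype.card ι = 1) : IsProj V (c • ∑ i, f i) where
  map_mem w := by
    simpa only [smul_apply, sum_apply] using
      V.smul_mem c (V.sum_mem fun i _ => (hf i).map_mem w)
  map_id v hv := by
    simp only [smul_apply, sum_apply, fun i => (hf i).map_id v hv, Finset.sum_const,
      Finset.card_univ, ← Nat.cast_smul_eq_nsmul k, smul_smul, hc, one_smul]

end LinearMap.IsProj

namespace Submodule

variable {k W ι₁ ι₂ : Type*} [CommRing k] [AddCommGroup W] [Module k W] {V : Submodule k W}
  [Fintype ι₁] [Fintype ι₂] [DecidableEq ι₂]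
  (b₁ : Basis ι₁ k V) (b₂ : Basis ι₂ k (W ⧸ V))

/-- The endomorphism of `W` with block matrix `!![0, x; 0, 0]` for the filtration `V ≤ W`. -/
noncomputable def upperRight (x : Matrix ι₁ ι₂ k) : Module.End k W :=
  V.subtype ∘ₗ Matrix.toLin b₂ b₁ x ∘ₗ V.mkQ

theorem upperRight_apply_mem (x : Matrix ι₁ ι₂ k) (w : W) : upperRight b₁ b₂ x w ∈ V :=
  Subtype.prop _

theorem upperRight_apply_of_mem (x : Matrix ι₁ ι₂ k) {v : W} (hv : v ∈ V) :
    upperRight b₁ b₂ x v = 0 := by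
  simp [upperRight, (Quotient.mk_eq_zero V).mpr hv]

theorem upperRight_add (x y : Matrix ι₁ ι₂ k) :
    upperRight b₁ b₂ (x + y) = upperRight b₁ b₂ x + upperRight b₁ b₂ y := by
  simp [upperRight, add_comp, comp_add]

theorem upperRight_injective : Function.Injective (upperRight (V := V) b₁ b₂) := by
  intro x y h
  refine (Matrix.toLin b₂ b₁).injective (linearMap_qext V (LinearMap.ext fun w => ?_))
  exact Subtype.ext (LinearMap.congr_fun h w)

theorem exists_upperRight_eq {e : Module.End k W} (he : ∀ w, e w ∈ V)
    (he' : ∀ v ∈ V, e v = 0) : ∃ x, upperRight b₁ b₂ x = e := by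
  refine ⟨toMatrix b₂ b₁ (V.liftQ (e.codRestrict V he) fun v hv => Subtype.ext (he' v hv)), ?_⟩
  ext w
  simp only [upperRight, Matrix.toLin_toMatrix]
  rfl

theorem mul_upperRight_mul [DecidableEq ι₁] (x : Matrix ι₁ ι₂ k) {t t' : Module.End k W}
    (ht : V ≤ V.comap t) (ht' : V ≤ V.comap t') :
    t * upperRight b₁ b₂ x * t' = upperRight b₁ b₂
      (toMatrix b₁ b₁ (t.restrict ht) * x * toMatrix b₂ b₂ (V.mapQ V t' ht')) := by
  ext w
  simp [upperRight, Matrix.toLin_mul b₂ b₂ b₁, Matrix.toLin_mul b₂ b₁ b₁]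

theorem _root_.LinearMap.IsProj.add_upperRight {q : Module.End k W} (hq : IsProj V q)
    (x : Matrix ι₁ ι₂ k) : IsProj V (q + upperRight b₁ b₂ x) where
  map_mem w := V.add_mem (hq.map_mem w) (upperRight_apply_mem b₁ b₂ x w)
  map_id v hv := by
    rw [LinearMap.add_apply, upperRight_apply_of_mem b₁ b₂ x hv, add_zero, hq.map_id v hv]

theorem _root_.LinearMap.IsProj.exists_eq_add_upperRight {q q' : Module.End k W}
    (hq : IsProj V q) (hq' : IsProj V q') : ∃ x, q' = q + upperRight b₁ b₂ x := by
  obtain ⟨x, hx⟩ := exists_upperRight_eq b₁ b₂ (e := q' - q)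
    (fun w => V.sub_mem (hq'.map_mem w) (hq.map_mem w))
    (fun v hv => by rw [LinearMap.sub_apply, hq'.map_id v hv, hq.map_id v hv, sub_self])
  exact ⟨x, by rw [hx, add_sub_cancel]⟩

end Submodule

namespace Representation

section Averaging

variable {k G W : Type*} [CommRing k] [Group G] [AddCommGroup W] [Module k W]
  (ρ : Representation k G W) {V : Submodule k W}

/-- The projection is the average of the conjugates `ρ g * q * ρ g⁻¹` over `g ∈ G ⧸ S`. -/
theorem exists_isProj_forall_commute_of_isUnit_index (hV : ∀ g, V ≤ V.comap (ρ g))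
    {S : Subgroup G} [S.FiniteIndex] (hS : IsUnit (S.index : k)) {q : Module.End k W}
    (hq : IsProj V q) (hqS : ∀ s ∈ S, Commute (ρ s) q) :
    ∃ q' : Module.End k W, IsProj V q' ∧ ∀ g, Commute (ρ g) q' := by
  have : Fintype (G ⧸ S) := Fintype.ofFinite _
  have hρ (g : G) : ρ g * ρ g⁻¹ = 1 := by rw [← map_mul, mul_inv_cancel, map_one]
  let conj : G ⧸ S → Module.End k W := Quotient.lift (fun g => ρ g * q * ρ g⁻¹) <| by
    intro g g' hg
    obtain ⟨s, hs, rfl⟩ : ∃ s ∈ S, g' = g * s :=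
      ⟨g⁻¹ * g', QuotientGroup.leftRel_apply.mp hg, (mul_inv_cancel_left g g').symm⟩
    simp only [mul_inv_rev, map_mul]
    rw [mul_assoc (ρ g) (ρ s) q, (hqS s hs).eq]
    simp only [mul_assoc]
    rw [← mul_assoc (ρ s), hρ, one_mul]
  have hconj (g : G) (x : G ⧸ S) : ρ g * conj x = conj (g • x) * ρ g := by
    induction x using QuotientGroup.induction_on with | H h => ?_
    show ρ g * (ρ h * q * ρ h⁻¹) = ρ (g * h) * q * ρ (g * h)⁻¹ * ρ g
    simp only [mul_inv_rev, map_mul, mul_assoc, ← map_mul ρ _ g, inv_mul_cancel, map_one,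
      mul_one]
  obtain ⟨c, hc⟩ := hS.exists_left_inv
  refine ⟨c • ∑ x, conj x, IsProj.smul_sum (fun x => ?_) ?_, fun g => ?_⟩
  · induction x using QuotientGroup.induction_on with
    | H g => exact hq.mul_mul (hV g) (hV g⁻¹) (hρ g)
  · rwa [← Nat.card_eq_fintype_card, ← Subgroup.index_eq_card]
  · simp only [Commute, SemiconjBy, mul_smul_comm, smul_mul_assoc, Finset.mul_sum,
      Finset.sum_mul, hconj]
    congr 1
    exact Fintype.sum_bijective _ (MulAction.bijective g) _ _ fun _ => rfl

end Averaging

section BlockDiagonal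

variable {k G W ι₁ ι₂ : Type*} [CommRing k] [Group G] [AddCommGroup W] [Module k W]
  [Fintype ι₁] [Fintype ι₂] [DecidableEq ι₁] [DecidableEq ι₂]
  (ρ : Representation k G W) {V : Submodule k W} (hV : ∀ g, V ≤ V.comap (ρ g))
  (b₁ : Basis ι₁ k V) (b₂ : Basis ι₂ k (W ⧸ V))

/-- The matrices of `ρ g` on `V` and on `W ⧸ V`, i.e. the diagonal blocks of `ρ g`. -/
noncomputable def blockDiagonal : G →* Matrix ι₁ ι₁ k × Matrix ι₂ ι₂ k :=
  ((toMatrixAlgEquiv b₁ : Module.End k V →* _).comp (ρ.subrepresentation V hV)).prod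
    ((toMatrixAlgEquiv b₂ : Module.End k (W ⧸ V) →* _).comp (ρ.quotient V hV))

theorem blockDiagonal_eq_one_iff {g : G} :
    ρ.blockDiagonal hV b₁ b₂ g = 1 ↔ (∀ v ∈ V, ρ g v = v) ∧ ∀ w, ρ g w - w ∈ V := by
  simp only [blockDiagonal, MonoidHom.prod_apply, MonoidHom.comp_apply, MonoidHom.coe_coe,
    Prod.mk_eq_one, map_eq_one_iff _ (toMatrixAlgEquiv _).injective, LinearMap.ext_iff,
    Submodule.Quotient.forall, Subtype.ext_iff]
  simp [Submodule.Quotient.eq]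

theorem eq_of_blockDiagonal_eq (hinj : ∀ g, ρ.blockDiagonal hV b₁ b₂ g = 1 → ρ g = 1) {g h : G}
    (hgh : ρ.blockDiagonal hV b₁ b₂ g = ρ.blockDiagonal hV b₁ b₂ h) : ρ g = ρ h := by
  have h1 : ρ (h⁻¹ * g) = 1 := hinj _ (by rw [map_mul, hgh, ← map_mul, inv_mul_cancel, map_one])
  rw [← mul_inv_cancel_left h g, map_mul, h1, mul_one]

theorem mul_upperRight_mul (g h : G) (x : Matrix ι₁ ι₂ k) :
    ρ g * V.upperRight b₁ b₂ x * ρ h = V.upperRight b₁ b₂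
      ((ρ.blockDiagonal hV b₁ b₂ g).1 * x * (ρ.blockDiagonal hV b₁ b₂ h).2) :=
  Submodule.mul_upperRight_mul b₁ b₂ x (hV g) (hV h)

end BlockDiagonal

section CharTwo

variable {G W ι₁ ι₂ : Type*} [Group G] [AddCommGroup W] [Module (ZMod 2) W]
  [Fintype ι₁] [Fintype ι₂] [DecidableEq ι₁] [DecidableEq ι₂]
  (ρ : Representation (ZMod 2) G W) {V : Submodule (ZMod 2) W} (hV : ∀ g, V ≤ V.comap (ρ g))
  (b₁ : Basis ι₁ (ZMod 2) V) (b₂ : Basis ι₂ (ZMod 2) (W ⧸ V))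

theorem commute_add_upperRight_iff {s : G} (hs : ρ s * ρ s = 1) (q : Module.End (ZMod 2) W)
    (x : Matrix ι₁ ι₂ (ZMod 2)) :
    Commute (ρ s) (q + V.upperRight b₁ b₂ x) ↔ ρ s * q * ρ s = q + V.upperRight b₁ b₂
      (x + (ρ.blockDiagonal hV b₁ b₂ s).1 * x * (ρ.blockDiagonal hV b₁ b₂ s).2) := by
  rw [commute_iff_mul_mul_eq_of_mul_self_eq_one hs, mul_add, add_mul, ρ.mul_upperRight_mul hV,
    upperRight_add, ← add_assoc, ← ZModModule.sub_eq_add (q + _), eq_sub_iff_add_eq]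

theorem exists_mul_mul_eq_add_upperRight {q : Module.End (ZMod 2) W} (hq : IsProj V q) {s : G}
    (hs : ρ s * ρ s = 1) : ∃ c, ρ s * q * ρ s = q + V.upperRight b₁ b₂ c ∧
      (ρ.blockDiagonal hV b₁ b₂ s).1 * c * (ρ.blockDiagonal hV b₁ b₂ s).2 = c := by
  obtain ⟨c, hc⟩ := hq.exists_eq_add_upperRight b₁ b₂ (hq.mul_mul (hV s) (hV s) hs)
  refine ⟨c, hc, upperRight_injective b₁ b₂ ?_⟩
  have h : ρ s * (ρ s * q * ρ s) * ρ s = q := by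
    simp only [← mul_assoc]
    rw [hs, one_mul, mul_assoc, hs, mul_one]
  rw [hc, mul_add, add_mul, hc, ρ.mul_upperRight_mul hV, add_assoc, add_eq_left] at h
  rw [← neg_eq_of_add_eq_zero_right h, ZModModule.neg_eq_self]

end CharTwo

section TwoGroup

variable {G W : Type*} [Group G] [AddCommGroup W] [Module (ZMod 2) W] (hG : IsPGroup 2 G)
  (ρ : Representation (ZMod 2) G W) {V : Submodule (ZMod 2) W} (hV : ∀ g, V ≤ V.comap (ρ g))
  (b₁ : Basis (Fin 2) (ZMod 2) V) (b₂ : Basis (Fin 2) (ZMod 2) (W ⧸ V))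
  (hinj : ∀ g, ρ.blockDiagonal hV b₁ b₂ g = 1 → ρ g = 1)

include hG

theorem blockDiagonal_mul_self (g : G) :
    ρ.blockDiagonal hV b₁ b₂ g * ρ.blockDiagonal hV b₁ b₂ g = 1 := by
  obtain ⟨n, hn⟩ := hG g
  have h : ρ.blockDiagonal hV b₁ b₂ g ^ 2 ^ n = 1 := by rw [← map_pow, hn, map_one]
  exact Prod.ext (Matrix.mul_self_eq_one_of_pow_two_pow_eq_one _ n congr($h.1))
    (Matrix.mul_self_eq_one_of_pow_two_pow_eq_one _ n congr($h.2))

theorem commute_blockDiagonal (g h : G) :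
    Commute (ρ.blockDiagonal hV b₁ b₂ g) (ρ.blockDiagonal hV b₁ b₂ h) :=
  commute_of_mul_self_eq_one_s11 (ρ.blockDiagonal_mul_self hG hV b₁ b₂ g)
    (ρ.blockDiagonal_mul_self hG hV b₁ b₂ h)
    (by rw [← map_mul]; exact ρ.blockDiagonal_mul_self hG hV b₁ b₂ (g * h))

include hinj

theorem mul_self_eq_one (g : G) : ρ g * ρ g = 1 := by
  rw [← map_mul]
  exact hinj _ (by rw [map_mul]; exact ρ.blockDiagonal_mul_self hG hV b₁ b₂ g)

theorem commute_apply (g h : G) : Commute (ρ g) (ρ h) :=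
  commute_of_mul_self_eq_one_s11 (ρ.mul_self_eq_one hG hV b₁ b₂ hinj g)
    (ρ.mul_self_eq_one hG hV b₁ b₂ hinj h)
    (by rw [← map_mul]; exact ρ.mul_self_eq_one hG hV b₁ b₂ hinj (g * h))

theorem exists_isProj_commute {q : Module.End (ZMod 2) W} (hq : IsProj V q) {s : G}
    (hs : ρ.blockDiagonal hV b₁ b₂ s ≠ 1) : ∃ q', IsProj V q' ∧ Commute (ρ s) q' := by
  have hρs := ρ.mul_self_eq_one hG hV b₁ b₂ hinj s
  obtain ⟨c, hc, hcs⟩ := ρ.exists_mul_mul_eq_add_upperRight hV b₁ b₂ hq hρs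
  obtain ⟨x, rfl⟩ :=
    Matrix.exists_eq_add_mul_mul _ (ρ.blockDiagonal_mul_self hG hV b₁ b₂ s) hs c hcs
  exact ⟨_, hq.add_upperRight b₁ b₂ x, (ρ.commute_add_upperRight_iff hV b₁ b₂ hρs q x).mpr hc⟩

theorem exists_isProj_commute_commute {q : Module.End (ZMod 2) W} (hq : IsProj V q) {s t : G}
    (hqs : Commute (ρ s) q) (ht : ρ.blockDiagonal hV b₁ b₂ t ≠ 1)
    (hts : ρ.blockDiagonal hV b₁ b₂ t ≠ ρ.blockDiagonal hV b₁ b₂ s) :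
    ∃ q', IsProj V q' ∧ Commute (ρ s) q' ∧ Commute (ρ t) q' := by
  have hρs := ρ.mul_self_eq_one hG hV b₁ b₂ hinj s
  have hρt := ρ.mul_self_eq_one hG hV b₁ b₂ hinj t
  have hst := ρ.commute_apply hG hV b₁ b₂ hinj s t
  have hqs' := (commute_iff_mul_mul_eq_of_mul_self_eq_one hρs).mp hqs
  obtain ⟨c, hc, hct⟩ := ρ.exists_mul_mul_eq_add_upperRight hV b₁ b₂ hq hρt
  have hcs : (ρ.blockDiagonal hV b₁ b₂ s).1 * c * (ρ.blockDiagonal hV b₁ b₂ s).2 = c := by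
    apply upperRight_injective b₁ b₂
    have h := (commute_iff_mul_mul_eq_of_mul_self_eq_one hρs).mp
      ((hst.mul_right hqs).mul_right hst)
    rwa [hc, mul_add, add_mul, hqs', ρ.mul_upperRight_mul hV, add_right_inj] at h
  obtain ⟨x, hxs, rfl⟩ := Matrix.exists_mul_mul_eq_and_eq_add_mul_mul _ _
    (ρ.blockDiagonal_mul_self hG hV b₁ b₂ s) (ρ.blockDiagonal_mul_self hG hV b₁ b₂ t)
    (ρ.commute_blockDiagonal hG hV b₁ b₂ s t).eq ht hts c hcs hct
  refine ⟨_, hq.add_upperRight b₁ b₂ x, ?_, (ρ.commute_add_upperRight_iff hV b₁ b₂ hρt q x).mpr hc⟩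
  rw [commute_iff_mul_mul_eq_of_mul_self_eq_one hρs, mul_add, add_mul, hqs',
    ρ.mul_upperRight_mul hV, hxs]

theorem exists_isProj_forall_commute_of_blockDiagonal :
    ∃ q, IsProj V q ∧ ∀ g, Commute (ρ g) q := by
  have hρ {q g h} (hgh : ρ.blockDiagonal hV b₁ b₂ g = ρ.blockDiagonal hV b₁ b₂ h)
      (hq : Commute (ρ h) q) : Commute (ρ g) q :=
    ρ.eq_of_blockDiagonal_eq hV b₁ b₂ hinj hgh ▸ hq
  have hρ1 {q g} (hg : ρ.blockDiagonal hV b₁ b₂ g = 1) : Commute (ρ g) q := by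
    rw [hinj g hg]
    exact Commute.one_left q
  obtain ⟨U, hU⟩ := V.exists_isCompl
  have hq₀ : IsProj V (V.projection U hU) :=
    ⟨projection_apply_mem hU, fun _ hv => projection_apply_of_mem_left hU hv⟩
  -- The image of `G` in `𝕄 × 𝕄` is trivial, or generated by `s`, or by `s` and `t`.
  by_cases h₁ : ∀ g, ρ.blockDiagonal hV b₁ b₂ g = 1
  · exact ⟨_, hq₀, fun g => hρ1 (h₁ g)⟩
  push Not at h₁
  obtain ⟨s, hs⟩ := h₁
  obtain ⟨q₁, hq₁, hq₁s⟩ := ρ.exists_isProj_commute hG hV b₁ b₂ hinj hq₀ hs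
  by_cases h₂ : ∀ g, ρ.blockDiagonal hV b₁ b₂ g = 1 ∨
      ρ.blockDiagonal hV b₁ b₂ g = ρ.blockDiagonal hV b₁ b₂ s
  · exact ⟨q₁, hq₁, fun g => (h₂ g).elim hρ1 (hρ · hq₁s)⟩
  push Not at h₂
  obtain ⟨t, ht, hts⟩ := h₂
  obtain ⟨q₂, hq₂, hq₂s, hq₂t⟩ :=
    ρ.exists_isProj_commute_commute hG hV b₁ b₂ hinj hq₁ hq₁s ht hts
  refine ⟨q₂, hq₂, fun g => ?_⟩
  have hbd := ρ.blockDiagonal_mul_self hG hV b₁ b₂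
  have hcomm := ρ.commute_blockDiagonal hG hV b₁ b₂
  rcases Matrix.eq_one_or_eq_or_eq_or_eq_mul _ _ _ (hbd s) (hbd t) (hbd g) (hcomm s t).eq
    (hcomm g s).eq (hcomm g t).eq hs ht hts with h | h | h | h
  · exact hρ1 h
  · exact hρ h hq₂s
  · exact hρ h hq₂t
  · exact hρ (h.trans (map_mul _ s t).symm) (by rw [map_mul]; exact hq₂s.mul_left hq₂t)

end TwoGroup

theorem exists_isProj_forall_commute_of_isPGroup {G W : Type*} [Group G] [AddCommGroup W]
    [Module (ZMod 2) W] (hG : IsPGroup 2 G) (ρ : Representation (ZMod 2) G W)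
    {V : Submodule (ZMod 2) W} (hV₁ : finrank (ZMod 2) V = 2)
    (hV₂ : finrank (ZMod 2) (W ⧸ V) = 2) (hV : ∀ g, V ≤ V.comap (ρ g))
    (hinj : ∀ g, (∀ v ∈ V, ρ g v = v) → (∀ w, ρ g w - w ∈ V) → ρ g = 1) :
    ∃ q, IsProj V q ∧ ∀ g, Commute (ρ g) q := by
  have : Module.Finite (ZMod 2) V := Module.finite_of_finrank_eq_succ hV₁
  have : Module.Finite (ZMod 2) (W ⧸ V) := Module.finite_of_finrank_eq_succ hV₂
  let b₁ := Module.finBasisOfFinrankEq _ _ hV₁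
  let b₂ := Module.finBasisOfFinrankEq _ _ hV₂
  refine ρ.exists_isProj_forall_commute_of_blockDiagonal hG hV b₁ b₂ fun g hg => ?_
  obtain ⟨hg₁, hg₂⟩ := (ρ.blockDiagonal_eq_one_iff hV b₁ b₂).mp hg
  exact hinj g hg₁ hg₂

end Representation

/-- Let `W` be a 4-dimensional `𝔽₂`-vector space, `V₁ ⊆ W` a 2-dimensional subspace, and
`G` a finite group acting linearly on `W` preserving `V₁` (hence acting on `V₁` and on
`V₂ = W/V₁`).  If the induced map from the image of `G` in `GL(W)` to `GL(V₁) × GL(V₂)`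
is injective (i.e. any `g` acting trivially on both `V₁` and `W/V₁` acts trivially on `W`),
then the extension `0 → V₁ → W → V₂ → 0` of `𝔽₂[G]`-modules splits: `V₁` has a
`G`-invariant complement in `W`. -/
theorem stmt_11 (G : Type*) [Group G] [Finite G]
    (W : Type*) [AddCommGroup W] [Module (ZMod 2) W]
    (hW : Module.finrank (ZMod 2) W = 4)
    (ρ : Representation (ZMod 2) G W)
    (V₁ : Submodule (ZMod 2) W) (hV₁ : Module.finrank (ZMod 2) V₁ = 2)
    (hpres : ∀ (g : G), ∀ x ∈ V₁, ρ g x ∈ V₁)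
    (hinj : ∀ g : G, (∀ x ∈ V₁, ρ g x = x) → (∀ x : W, ρ g x - x ∈ V₁) →
      ρ g = LinearMap.id) :
    ∃ U : Submodule (ZMod 2) W, (∀ (g : G), ∀ x ∈ U, ρ g x ∈ U) ∧ IsCompl V₁ U := by
  have hV : ∀ g, V₁ ≤ V₁.comap (ρ g) := hpres
  have : Module.Finite (ZMod 2) W := Module.finite_of_finrank_eq_succ hW
  have hV₂ : finrank (ZMod 2) (W ⧸ V₁) = 2 := by
    have := V₁.finrank_quotient_add_finrank
    omega
  obtain ⟨S⟩ : Nonempty (Sylow 2 G) := inferInstance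
  obtain ⟨q, hq, hqS⟩ := Representation.exists_isProj_forall_commute_of_isPGroup S.isPGroup'
    (ρ.comp (S : Subgroup G).subtype) hV₁ hV₂ (fun s => hV s) (fun s => hinj s)
  have hS : IsUnit (S.index : ZMod 2) :=
    Ne.isUnit ((ZMod.natCast_eq_zero_iff _ 2).not.mpr S.not_dvd_index)
  obtain ⟨q', hq', hq'G⟩ := ρ.exists_isProj_forall_commute_of_isUnit_index hV hS hq
    fun s hs => hqS ⟨s, hs⟩
  refine ⟨ker q', fun g w hw => ?_, hq'.isCompl⟩
  rw [mem_ker] at hw ⊢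
  rw [← Module.End.mul_apply, ← (hq'G g).eq, Module.End.mul_apply, hw, map_zero]
end

section
/- Let V be a finite-dimensional vector space over a field F of characteristic 0 with dim V = 4, and let g ∈ GL(V). If the induced map ⋀²g on the exterior square ⋀²V is the identity, then g = id or g = −id. -/
/-!
If `⋀²f` fixes every `v ∧ w`, then `f v ∧ v ∧ w = f v ∧ f v ∧ f w = 0` for all `v, w`.
When `dim V ≥ 3` this forces `f v` and `v` to be collinear, since otherwise a third vector `w`
would make `f v, v, w` independent, with nonzero wedge; hence `f = a • id`. Then
`v ∧ w = a² (v ∧ w)` for an independent pair gives `a² = 1`.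
-/

open ExteriorAlgebra Module

section

variable {F V : Type*} [Field F] [AddCommGroup V] [Module F V]

theorem ExteriorAlgebra.ιMulti_ne_zero_of_linearIndependent {n : ℕ} {v : Fin n → V}
    (hv : LinearIndependent F v) : ιMulti F n v ≠ 0 := by
  have := (exteriorPower.ιMulti_family_linearIndependent_field (n := n) hv).ne_zero
    (Set.powersetCard.ofFinEmbEquiv (OrderIso.refl (Fin n)).toOrderEmbedding)
  intro h
  exact this (Subtype.ext (by simpa [exteriorPower.ιMulti_family] using h))

theorem ExteriorAlgebra.ιMulti_two (v w : V) : ιMulti F 2 ![v, w] = ι F v * ι F w := by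
  simp [ιMulti_apply]

theorem ExteriorAlgebra.ι_mul_ι_mem_exteriorPower_two (v w : V) :
    ι F v * ι F w ∈ (⋀[F]^2 V : Submodule F (ExteriorAlgebra F V)) := by
  rw [← ιMulti_two (F := F)]
  exact ιMulti_range F 2 ⟨_, rfl⟩

theorem ExteriorAlgebra.ι_mul_ι_ne_zero {v w : V} (h : LinearIndependent F ![v, w]) :
    ι F v * ι F w ≠ 0 :=
  ιMulti_two (F := F) v w ▸ ιMulti_ne_zero_of_linearIndependent h

variable {f : V →ₗ[F] V}

theorem LinearMap.not_linearIndependent_pair_apply_of_ι_mul_ι_eq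
    (hf : ∀ v w, ι F (f v) * ι F (f w) = ι F v * ι F w) (hV : 3 ≤ finrank F V) (v : V) :
    ¬LinearIndependent F ![v, f v] := by
  intro hind
  obtain ⟨w, hw⟩ := exists_linearIndependent_snoc_of_lt_finrank
    (LinearIndependent.pair_symm_iff.mp hind) (by omega)
  apply ιMulti_ne_zero_of_linearIndependent hw
  calc ιMulti F 3 (Fin.snoc ![f v, v] w) = ι F (f v) * (ι F v * ι F w) := by
        simp [ιMulti_apply]
    _ = ι F (f v) * ι F (f v) * ι F (f w) := by rw [← hf, mul_assoc]
    _ = 0 := by rw [ι_sq_zero, zero_mul]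

theorem LinearMap.eq_id_or_eq_neg_id_of_ι_mul_ι_eq
    (hf : ∀ v w, ι F (f v) * ι F (f w) = ι F v * ι F w) (hV : 3 ≤ finrank F V) :
    f = LinearMap.id ∨ f = -LinearMap.id := by
  obtain ⟨a, rfl⟩ := exists_eq_smul_id_of_forall_notLinearIndependent
    (not_linearIndependent_pair_apply_of_ι_mul_ι_eq hf hV)
  obtain ⟨v, w, hvw⟩ : ∃ v w : V, LinearIndependent F ![v, w] := by
    have : Nontrivial V := Module.nontrivial_of_finrank_pos (R := F) (by omega)
    obtain ⟨v, hv⟩ := exists_ne (0 : V)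
    exact ⟨v, exists_linearIndependent_pair_of_one_lt_finrank (by omega) hv⟩
  have ha : a * a = 1 := by
    refine smul_left_injective F (ι_mul_ι_ne_zero hvw) ?_
    simpa [smul_smul] using hf v w
  rcases mul_self_eq_one_iff.mp ha with rfl | rfl <;> simp [Module.End.one_eq_id]

end

theorem stmt_19_general (F V : Type*) [Field F] [AddCommGroup V] [Module F V]
    (hV : Module.finrank F V = 4) (g : V ≃ₗ[F] V)
    (hg : ∀ x ∈ (⋀[F]^2 V : Submodule F (ExteriorAlgebra F V)),
      ExteriorAlgebra.map (g : V →ₗ[F] V) x = x) :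
    (g : V →ₗ[F] V) = LinearMap.id ∨ (g : V →ₗ[F] V) = -LinearMap.id := by
  refine LinearMap.eq_id_or_eq_neg_id_of_ι_mul_ι_eq (fun v w => ?_) (by omega)
  simpa using hg _ (ι_mul_ι_mem_exteriorPower_two v w)

/-- Let `V` be a 4-dimensional vector space over a field `F` of characteristic zero and
`g ∈ GL(V)`.  If the induced map `⋀²g` on the exterior square of `V` is the identity,
then `g = id` or `g = -id`. -/
theorem stmt_19 (F V : Type*) [Field F] [CharZero F] [AddCommGroup V] [Module F V]
    (hV : Module.finrank F V = 4) (g : V ≃ₗ[F] V)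
    (hg : ∀ x ∈ (⋀[F]^2 V : Submodule F (ExteriorAlgebra F V)),
      ExteriorAlgebra.map (g : V →ₗ[F] V) x = x) :
    (g : V →ₗ[F] V) = LinearMap.id ∨ (g : V →ₗ[F] V) = -LinearMap.id :=
  stmt_19_general F V hV g hg
end
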